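/- arXiv:1812.03197 — 2 statements merged into one kernel-verified Lean document; each statement's English description precedes it below -/
import Mathlib

section
/- The lattice O_40 has a basis consisting of 4-vectors: there exists a matrix P ∈ GL(40, ℤ) such that every diagonal entry of P·G·Pᵀ equals 4. -/
open Matrix

noncomputable section

/-- The 20×20 integer matrix `B1` (entries given as rationals). -/
def B1 : Matrix (Fin 20) (Fin 20) ℚ :=
  !![0,2,1,1,2,2,2,2,1,2,4,20,16,10,4,10,2,8,16,7;
    1,0,2,1,1,2,2,2,2,1,17,10,11,19,4,7,10,11,20,13;
    2,1,0,2,1,1,2,2,2,2,19,20,16,2,16,16,7,4,17,16;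
    2,2,1,0,2,1,1,2,2,2,17,4,11,19,17,19,16,16,16,1;
    1,2,2,1,0,2,1,1,2,2,17,2,16,14,13,20,19,4,7,7;
    1,1,2,2,1,0,2,1,1,2,8,11,11,13,20,10,20,10,13,1;
    1,1,1,2,2,1,0,2,1,1,14,17,8,5,4,14,10,2,7,10;
    1,1,1,1,2,2,1,0,2,1,7,8,5,5,11,1,14,1,11,4;
    2,1,1,1,1,2,2,1,0,2,10,19,11,11,14,17,1,11,4,16;
    1,2,1,1,1,1,2,2,1,0,5,7,13,20,14,2,17,7,5,13;
    2,1,2,1,1,1,1,2,2,1,3,2,1,1,2,2,2,2,1,10;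
    1,2,1,2,1,1,1,1,2,2,1,3,2,1,1,2,2,2,2,10;
    2,1,2,1,2,1,1,1,1,2,2,1,3,2,1,1,2,2,2,10;
    2,2,1,2,1,2,1,1,1,1,2,2,1,3,2,1,1,2,2,10;
    2,2,2,1,2,1,2,1,1,1,1,2,2,1,3,2,1,1,2,10;
    2,2,2,2,1,2,1,2,1,1,1,1,2,2,1,3,2,1,1,10;
    1,2,2,2,2,1,2,1,2,1,1,1,1,2,2,1,3,2,1,10;
    1,1,2,2,2,2,1,2,1,2,1,1,1,1,2,2,1,3,2,10;
    2,1,1,2,2,2,2,1,2,1,2,1,1,1,1,2,2,1,3,10;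
    1,1,1,1,1,1,1,1,1,1,1,1,1,1,1,1,1,1,1,11]

/-- The 10×10 integer matrix `B3` (entries given as rationals). -/
def B3 : Matrix (Fin 10) (Fin 10) ℚ :=
  !![18,3,6,12,18,12,0,15,6,3;
    6,12,12,3,18,15,12,12,3,18;
    3,3,6,0,6,6,15,18,6,15;
    6,18,12,3,6,3,6,6,6,9;
    6,0,6,9,9,3,3,18,15,3;
    15,12,12,9,3,12,3,12,9,9;
    9,6,15,18,18,9,12,0,15,0;
    15,15,18,18,12,0,9,0,12,6;
    12,3,12,12,9,6,0,12,18,15;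
    18,15,9,3,9,0,6,15,18,18]

/-- `B2 = [[3·I₁₀, B3],[0, 21·I₁₀]]`. -/
def B2 : Matrix (Fin 20) (Fin 20) ℚ :=
  Matrix.reindex finSumFinEquiv finSumFinEquiv
    (Matrix.fromBlocks ((3 : ℚ) • (1 : Matrix (Fin 10) (Fin 10) ℚ)) B3
      0 ((21 : ℚ) • (1 : Matrix (Fin 10) (Fin 10) ℚ)))

/-- `B = [[I₂₀, B1],[0, B2]]`. -/
def Bmat : Matrix (Fin 40) (Fin 40) ℚ :=
  Matrix.reindex finSumFinEquiv finSumFinEquiv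
    (Matrix.fromBlocks (1 : Matrix (Fin 20) (Fin 20) ℚ) B1 0 B2)

/-- `G_e = (1/21)·[[28·I₂₀, 7·I₂₀],[7·I₂₀, 2·I₂₀]]`,
the Gram matrix of the chosen basis of the dual lattice `L^∨`. -/
def Ge : Matrix (Fin 40) (Fin 40) ℚ :=
  (1 / 21 : ℚ) •
    Matrix.reindex finSumFinEquiv finSumFinEquiv
      (Matrix.fromBlocks ((28 : ℚ) • (1 : Matrix (Fin 20) (Fin 20) ℚ))
        ((7 : ℚ) • (1 : Matrix (Fin 20) (Fin 20) ℚ))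
        ((7 : ℚ) • (1 : Matrix (Fin 20) (Fin 20) ℚ))
        ((2 : ℚ) • (1 : Matrix (Fin 20) (Fin 20) ℚ)))

/-- The Gram matrix `G = B · G_e · Bᵀ` of the lattice `O₄₀`
(its entries are in fact integers). -/
def GO40 : Matrix (Fin 40) (Fin 40) ℚ :=
  Bmat * Ge * Bmatᵀ

/-- The bilinear form of `O₄₀` on integer row vectors: `(x, y) ↦ x · G · yᵀ`. -/
def ip (x y : Fin 40 → ℤ) : ℚ :=
  (fun i => (x i : ℚ)) ⬝ᵥ GO40.mulVec (fun j => (y j : ℚ))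

/-! The rows of `Bmat` are the integral coordinates of a basis of `O₄₀` in a basis of `L^∨` with
Gram matrix `G_e`, so the vector with `L^∨`-coordinates `(x, y) ∈ ℤ²⁰ × ℤ²⁰` has norm
`(28 x·x + 14 x·y + 2 y·y) / 21`. A basis of 4-vectors is given explicitly by the rows of `P40`:
it is unimodular because `Q40` is an integral inverse, and the rows of `P40 * Bmat` have norm `4`;
both are finite computations checked by the kernel. -/

namespace Matrix

variable {m n R : Type*} [Fintype n]

theorem mul_mul_transpose_apply_self [NonUnitalSemiring R] (M : Matrix m n R) (A : Matrix n n R)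
    (i : m) : (M * A * Mᵀ) i i = M i ⬝ᵥ A *ᵥ M i := by
  simp only [mul_apply, transpose_apply, dotProduct, mulVec, Finset.mul_sum, Finset.sum_mul,
    mul_assoc]
  exact Finset.sum_comm

theorem dotProduct_reindex_mulVec [Fintype m] [NonUnitalNonAssocSemiring R] (e : m ≃ n)
    (M : Matrix m m R) (v : n → R) : v ⬝ᵥ reindex e e M *ᵥ v = v ∘ e ⬝ᵥ M *ᵥ (v ∘ e) := by
  rw [reindex_apply, submatrix_mulVec_equiv, Equiv.symm_symm, dotProduct_comp_equiv_symm]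

theorem dotProduct_fromBlocks_smul_one_mulVec [Fintype m] [DecidableEq m] [CommSemiring R]
    (a b c d : R) (v : m ⊕ m → R) :
    v ⬝ᵥ fromBlocks (a • 1) (b • 1) (c • 1) (d • 1) *ᵥ v =
      a * (v ∘ Sum.inl ⬝ᵥ v ∘ Sum.inl) + (b + c) * (v ∘ Sum.inl ⬝ᵥ v ∘ Sum.inr) +
        d * (v ∘ Sum.inr ⬝ᵥ v ∘ Sum.inr) := by
  rw [fromBlocks_mulVec, dotProduct_block]
  simp only [Sum.elim_comp_inl, Sum.elim_comp_inr, smul_mulVec, one_mulVec, dotProduct_add,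
    dotProduct_smul, smul_eq_mul, dotProduct_comm (v ∘ Sum.inr) (v ∘ Sum.inl)]
  ring

end Matrix

/-- The kernel reads list entries far faster than the nested `Fin.cons` of `!![…]`, so the
certificates below are stored as lists; missing entries are `0`. -/
def Matrix.ofLists {α : Type*} [Zero α] {m n : ℕ} (rows : List (List α)) :
    Matrix (Fin m) (Fin n) α :=
  of fun i j => (rows.getD i []).getD j 0

/-- Twenty-one times the norm of `v` for the Gram matrix `(1/21)·[[28, 7], [7, 2]] ⊗ Iₙ`. -/
def dualNorm21 {R : Type*} [CommSemiring R] {n : ℕ} (v : Fin (n + n) → R) : R :=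
  28 * (v ∘ Fin.castAdd n ⬝ᵥ v ∘ Fin.castAdd n) + 14 * (v ∘ Fin.castAdd n ⬝ᵥ v ∘ Fin.natAdd n) +
    2 * (v ∘ Fin.natAdd n ⬝ᵥ v ∘ Fin.natAdd n)

theorem dotProduct_Ge_mulVec (v : Fin 40 → ℚ) : v ⬝ᵥ Ge *ᵥ v = dualNorm21 (n := 20) v / 21 := by
  have hx : v ∘ (finSumFinEquiv : Fin 20 ⊕ Fin 20 ≃ _) ∘ Sum.inl = v ∘ Fin.castAdd 20 := rfl
  have hy : v ∘ (finSumFinEquiv : Fin 20 ⊕ Fin 20 ≃ _) ∘ Sum.inr = v ∘ Fin.natAdd 20 := rfl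
  rw [Ge, smul_mulVec, dotProduct_smul, dotProduct_reindex_mulVec,
    dotProduct_fromBlocks_smul_one_mulVec, Function.comp_assoc, Function.comp_assoc, hx, hy,
    dualNorm21, smul_eq_mul]
  ring

theorem map_dualNorm21 {R S : Type*} [CommSemiring R] [CommSemiring S] (f : R →+* S) {n : ℕ}
    (v : Fin (n + n) → R) : f (dualNorm21 v) = dualNorm21 (f ∘ v) := by
  simp [dualNorm21, dotProduct, Function.comp_def, map_ofNat]

/-- `Bmat` has integer entries (`Bint_map_intCast`); the kernel computes much faster over `ℤ`
than over `ℚ`. -/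
def Bint : Matrix (Fin 40) (Fin 40) ℤ := Bmat.map Rat.num

theorem Bint_map_intCast : Bint.map (Int.cast : ℤ → ℚ) = Bmat := by
  decide +kernel

def P40 : Matrix (Fin 40) (Fin 40) ℤ := ofLists
  [([0,0,-1,0,0,0,0,0,0,0,1,0,0,0,0,0,0,0,0,1,0,-1,0,0,-1,-1,0,0,0,0,2,2,2,1,2,2,1,2,2,1] : List ℤ),
    ([0,0,1,0,0,0,0,0,0,0,0,0,0,0,0,0,0,-1,0,0,-1,0,0,0,1,1,-1,0,-1,0,0,-1,0,1,1,0,0,0,0,0] : List ℤ),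
    ([0,0,-1,0,0,0,0,0,0,0,0,0,1,0,0,0,0,0,0,1,0,-1,0,0,-1,-1,0,0,0,0,2,2,2,1,2,2,1,2,2,1] : List ℤ),
    ([0,0,-1,0,0,0,0,0,0,0,0,0,0,0,0,0,1,0,0,1,0,-1,0,0,-1,-1,0,0,0,0,2,2,2,1,2,2,1,2,2,1] : List ℤ),
    ([0,0,0,0,0,0,0,0,0,-1,1,0,0,0,0,0,0,0,0,-1,0,1,0,1,1,1,1,0,0,0,-2,-2,-2,-1,-2,-2,-1,-2,-2,-1] : List ℤ),
    ([0,0,-1,0,0,0,0,0,0,0,0,0,0,0,1,0,0,0,0,1,0,-1,0,0,-1,-1,0,0,0,0,2,2,2,1,2,2,1,2,2,1] : List ℤ),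
    ([0,0,0,0,0,0,0,0,0,0,0,0,0,1,0,0,0,-1,0,1,-1,-1,0,0,0,0,-1,0,-1,0,2,1,2,2,3,2,1,2,2,1] : List ℤ),
    ([0,0,-1,0,0,0,0,0,0,0,0,0,0,0,0,1,0,0,0,1,0,-1,0,0,-1,-1,0,0,0,0,2,2,2,1,2,2,1,2,2,1] : List ℤ),
    ([0,0,0,0,0,0,0,0,0,0,0,1,0,0,0,0,0,-1,0,1,-1,-1,0,0,0,0,-1,0,-1,0,2,1,2,2,3,2,1,2,2,1] : List ℤ),
    ([0,0,0,0,-1,0,1,1,0,0,0,-1,0,-1,1,0,0,0,-1,-1,1,1,0,1,1,1,0,-1,1,1,-3,-3,-2,-1,-3,-2,-1,-4,-3,-2] : List ℤ),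
    ([0,0,1,1,0,0,0,-1,0,0,0,0,1,0,1,-1,1,-2,0,1,-2,-1,-2,-1,-1,1,-2,0,-1,-1,3,2,3,3,5,2,3,5,4,3] : List ℤ),
    ([0,0,0,0,0,1,0,0,0,0,0,-1,0,0,0,0,0,0,0,0,0,1,-1,0,0,-1,-1,0,1,0,0,0,0,0,-1,0,0,0,0,0] : List ℤ),
    ([0,0,1,0,1,0,0,0,1,-1,1,1,-2,0,0,-1,-1,0,0,0,0,1,-1,0,0,0,0,0,-2,0,-1,-2,0,1,-1,-2,0,1,1,1] : List ℤ),
    ([0,0,0,-1,0,1,1,1,0,0,0,-1,-1,-1,0,1,-1,0,0,-1,1,2,0,2,1,0,0,0,1,1,-4,-5,-4,-2,-5,-3,-3,-4,-4,-3] : List ℤ),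
    ([0,0,1,0,0,0,0,0,0,0,0,-1,-1,2,-1,-1,1,0,0,-1,0,1,0,-1,1,0,0,0,0,1,-2,-1,-1,-1,-2,-1,-1,-2,-2,-1] : List ℤ),
    ([0,0,1,0,0,0,1,0,0,1,-1,-1,0,1,0,-1,1,-2,0,0,0,-1,0,0,0,1,-2,0,0,0,-1,-1,0,0,1,0,0,0,0,0] : List ℤ),
    ([0,0,1,0,1,-1,0,0,1,0,0,0,-1,1,-2,0,0,0,0,0,0,0,0,0,0,0,1,-1,-1,-1,0,0,0,0,0,-2,0,1,1,1] : List ℤ),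
    ([0,0,-1,0,-1,0,0,1,0,-1,0,0,1,0,0,1,1,-1,0,1,-1,-1,1,0,0,-1,0,-1,0,1,3,2,3,3,3,3,1,1,1,0] : List ℤ),
    ([0,0,0,0,1,0,1,-1,0,0,1,0,0,0,-1,1,-2,0,0,0,0,0,0,0,0,0,0,0,1,-1,-1,0,-1,-1,0,-2,0,0,0,0] : List ℤ),
    ([0,0,-1,0,0,2,0,-1,1,-1,-1,0,1,0,0,1,0,0,-1,0,0,0,0,-1,0,-2,0,1,1,0,1,1,0,-1,-1,0,0,0,0,1] : List ℤ),
    ([0,0,0,0,0,0,0,0,0,0,0,-1,0,0,0,0,1,0,0,0,0,0,-1,0,-1,0,-1,0,0,1,0,0,1,1,1,1,1,1,1,0] : List ℤ),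
    ([0,0,1,0,0,0,0,0,0,1,-1,0,1,1,-2,-1,0,0,0,0,0,1,0,-1,0,0,0,0,0,-1,0,0,-1,-1,-1,-1,-1,0,0,0] : List ℤ),
    ([0,0,0,-1,0,0,0,0,0,0,0,0,0,0,0,0,0,1,0,0,1,1,-1,0,0,-1,0,0,1,0,0,0,0,0,-1,0,1,0,0,-1] : List ℤ),
    ([0,1,0,0,-1,1,1,0,0,0,-1,0,1,0,0,-1,0,-1,0,1,0,-1,0,-1,1,-1,-2,0,0,0,1,1,2,1,2,2,1,0,0,1] : List ℤ),
    ([0,0,0,-1,0,0,0,0,0,0,-1,1,0,-1,-1,2,1,0,0,0,1,0,-1,0,1,0,0,0,0,0,0,0,0,0,0,0,1,0,0,0] : List ℤ),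
    ([0,0,0,0,0,0,0,0,0,0,0,0,0,0,0,0,0,1,-1,0,1,0,-1,0,0,0,1,-1,1,-1,0,1,0,-1,-1,-1,1,0,0,1] : List ℤ),
    ([1,0,0,0,0,0,0,0,0,0,-1,0,0,0,0,0,0,0,0,-1,0,0,1,1,0,0,0,0,1,0,-1,-2,-2,-1,-1,-1,-1,-2,-2,-1] : List ℤ),
    ([0,0,0,0,0,-1,0,0,0,0,0,0,-1,1,0,-1,-1,2,1,0,0,0,1,0,-1,0,1,0,0,0,0,0,0,0,0,0,0,0,0,-1] : List ℤ),
    ([0,0,0,-1,0,1,1,0,0,0,0,-1,0,1,-1,0,0,-1,0,-1,1,1,1,1,1,0,0,1,1,1,-4,-4,-4,-3,-4,-2,-3,-4,-4,-3] : List ℤ),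
    ([0,-1,0,0,0,0,-2,0,0,1,0,1,1,0,-1,0,1,0,0,1,-1,0,0,-1,0,0,1,1,-1,-2,4,3,1,0,1,2,0,3,3,2] : List ℤ),
    ([0,0,0,0,-1,-1,0,0,0,0,0,1,2,-1,-1,1,1,-1,0,0,-1,0,0,0,1,1,0,0,0,0,1,0,0,1,2,1,1,0,0,-1] : List ℤ),
    ([0,0,0,0,-1,2,1,0,0,-1,-1,1,0,0,0,0,-1,-1,0,0,0,1,1,0,2,-1,-1,1,1,1,-2,-3,-2,-1,-3,-1,-2,-4,-4,-2] : List ℤ),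
    ([0,0,0,0,0,0,0,-1,0,1,0,0,0,0,0,0,0,0,0,1,-1,-1,-1,-1,0,0,-1,0,0,0,2,2,2,1,3,2,2,2,2,1] : List ℤ),
    ([0,0,-1,1,1,0,0,0,0,0,-1,-1,2,-1,0,0,0,0,0,1,0,-1,0,0,-2,0,0,0,0,-2,2,3,1,0,2,0,0,3,3,3] : List ℤ),
    ([0,1,-1,0,1,-1,1,1,1,0,0,0,0,-2,0,1,1,-1,0,1,-1,-2,-1,0,-2,-1,-2,-2,-3,-1,6,4,7,6,8,3,3,7,8,5] : List ℤ),
    ([1,0,0,0,0,0,1,-1,0,0,1,-1,0,0,0,-1,0,-1,0,-2,1,1,1,2,1,2,0,2,1,1,-7,-7,-7,-5,-5,-4,-3,-6,-6,-4] : List ℤ),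
    ([0,0,0,0,0,-1,0,0,0,1,1,1,1,0,0,0,2,0,0,0,-2,-3,-3,-2,-2,-1,-2,-2,-3,-3,11,9,11,8,12,7,7,12,12,9] : List ℤ),
    ([0,-2,0,1,-1,1,0,0,-1,0,0,-1,0,1,1,0,0,1,0,0,-1,1,0,-1,0,-1,0,0,2,0,2,2,1,1,-1,1,0,0,0,0] : List ℤ),
    ([0,0,1,-1,0,0,0,0,0,0,0,0,1,1,0,0,1,1,-1,1,-1,-2,-3,-1,-2,-1,-2,-1,-1,-2,7,5,7,6,8,5,6,9,8,5] : List ℤ),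
    ([0,0,0,0,0,0,0,1,-1,0,0,0,0,0,0,0,0,0,0,0,1,0,0,0,-1,0,1,-1,0,1,-1,0,0,0,-1,0,-1,0,-1,0] : List ℤ)]

def Q40 : Matrix (Fin 40) (Fin 40) ℤ := ofLists
  [([-7,-1,-1,-2,2,11,7,-9,-7,-19,-7,-7,10,5,-8,5,-10,-3,4,2,17,2,-10,15,-3,19,5,-2,5,1,12,-15,-8,-10,6,-4,-4,10,-4,-2] : List ℤ),
    ([-5,6,0,2,3,13,9,-10,-12,-23,-9,-8,13,7,-9,8,-14,-6,5,4,20,3,-12,17,-4,24,7,-1,5,0,17,-18,-11,-12,6,-7,-4,11,-6,-2] : List ℤ),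
    ([-5,11,-1,1,4,19,7,-10,-14,-28,-12,-10,16,8,-11,10,-16,-6,5,4,25,5,-14,19,-5,29,8,-2,6,-1,20,-20,-12,-13,6,-8,-4,13,-7,-3] : List ℤ),
    ([-20,-16,-2,-6,-7,14,17,-22,-13,-31,-8,-11,14,5,-15,0,-13,-2,6,-3,29,-2,-19,23,-6,33,5,-6,16,3,17,-20,-12,-16,12,-5,-7,16,-5,-6] : List ℤ),
    ([-16,-5,-2,-2,-4,13,13,-15,-14,-30,-10,-11,16,6,-13,4,-15,-2,5,-1,26,0,-15,20,-7,32,6,-5,13,1,18,-19,-10,-13,9,-6,-5,14,-6,-5] : List ℤ),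
    ([-20,-19,-3,-6,-7,12,15,-21,-10,-27,-6,-12,12,5,-14,-2,-11,1,6,-4,27,-1,-17,21,-5,28,4,-7,15,3,12,-18,-10,-14,10,-4,-6,14,-4,-7] : List ℤ),
    ([-6,4,-1,0,1,11,6,-7,-9,-21,-8,-8,12,6,-8,6,-12,-3,3,2,17,3,-10,14,-4,22,5,-2,6,-1,14,-15,-8,-9,5,-5,-3,10,-5,-3] : List ℤ),
    ([-10,-7,-1,-3,-4,10,8,-12,-8,-18,-5,-8,9,5,-7,1,-9,1,4,-2,17,1,-11,12,-3,19,3,-4,7,1,9,-11,-7,-8,5,-3,-3,8,-3,-5] : List ℤ),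
    ([-6,12,-5,3,6,18,8,-7,-14,-27,-15,-7,17,7,-12,13,-15,-6,4,6,23,4,-11,18,-7,27,7,-1,4,-1,22,-19,-9,-11,5,-7,-3,12,-7,0] : List ℤ),
    ([-9,4,-3,3,2,14,10,-10,-13,-24,-11,-9,14,7,-11,8,-13,-4,5,3,22,3,-11,17,-6,24,6,-3,5,0,17,-17,-9,-11,5,-6,-3,11,-6,-2] : List ℤ),
    ([3,14,-1,4,5,8,0,1,-7,-9,-7,-1,7,3,-3,8,-7,-3,1,4,6,4,-3,4,-2,9,3,1,-2,-2,9,-6,-3,-3,0,-3,0,3,-3,1] : List ℤ),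
    ([2,13,-1,4,5,8,0,1,-6,-9,-7,-1,7,3,-3,8,-7,-3,1,4,6,4,-3,4,-2,9,3,1,-2,-2,9,-6,-3,-3,0,-3,0,3,-3,1] : List ℤ),
    ([2,14,0,4,5,8,0,1,-7,-9,-7,-1,7,3,-3,8,-7,-3,1,4,6,4,-3,4,-2,9,3,1,-2,-2,9,-6,-3,-3,0,-3,0,3,-3,1] : List ℤ),
    ([2,13,-1,4,5,8,1,1,-7,-9,-7,-1,7,3,-3,8,-7,-3,1,4,6,4,-3,4,-2,9,3,1,-2,-2,9,-6,-3,-3,0,-3,0,3,-3,1] : List ℤ),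
    ([2,14,-1,4,5,9,0,1,-7,-9,-7,-1,7,3,-3,8,-7,-3,1,4,6,4,-3,4,-2,9,3,1,-2,-2,9,-6,-3,-3,0,-3,0,3,-3,1] : List ℤ),
    ([2,14,-1,4,5,8,0,2,-7,-9,-7,-1,7,3,-3,8,-7,-3,1,4,6,4,-3,4,-2,9,3,1,-2,-2,9,-6,-3,-3,0,-3,0,3,-3,1] : List ℤ),
    ([2,14,-1,5,5,8,0,1,-7,-9,-7,-1,7,3,-3,8,-7,-3,1,4,6,4,-3,4,-2,9,3,1,-2,-2,9,-6,-3,-3,0,-3,0,3,-3,1] : List ℤ),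
    ([3,16,-1,5,6,9,0,1,-7,-9,-8,0,7,3,-3,9,-7,-4,1,5,6,4,-3,4,-2,9,3,2,-3,-2,10,-6,-3,-3,0,-3,0,3,-3,2] : List ℤ),
    ([2,12,0,3,4,8,0,0,-7,-9,-6,-1,7,3,-3,7,-7,-2,1,3,6,4,-4,4,-1,9,3,1,-1,-2,8,-6,-3,-3,0,-3,0,3,-3,0] : List ℤ),
    ([7,24,-1,8,9,10,-2,5,-8,-8,-9,0,8,4,-2,12,-8,-5,1,7,5,6,-1,3,-2,8,4,3,-6,-3,11,-6,-3,-2,-2,-4,1,2,-4,3] : List ℤ),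
    ([-9,-4,-3,-2,-1,11,11,-13,-9,-19,-7,-6,9,3,-10,3,-8,-4,4,1,19,-1,-10,15,-4,20,4,-2,8,2,13,-13,-8,-10,7,-4,-4,10,-4,-1] : List ℤ),
    ([-6,15,-5,6,6,19,9,-8,-13,-25,-14,-8,15,8,-11,12,-14,-7,6,7,25,4,-9,18,-7,26,7,0,2,0,21,-18,-11,-11,4,-7,-2,11,-8,1] : List ℤ),
    ([-2,15,-2,7,5,13,6,-6,-9,-16,-10,-4,10,6,-7,10,-10,-6,5,7,16,3,-6,12,-4,17,5,2,-1,0,15,-13,-9,-8,2,-5,-1,7,-6,2] : List ℤ),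
    ([-3,4,-1,1,3,9,5,-6,-5,-14,-6,-6,7,5,-6,5,-7,-4,3,3,14,2,-6,11,-3,14,4,-1,2,0,10,-11,-7,-7,3,-4,-2,7,-4,-1] : List ℤ),
    ([-6,-1,0,0,0,9,8,-11,-6,-13,-5,-3,6,3,-6,3,-6,-4,4,2,13,-1,-8,11,-2,14,3,0,4,2,10,-10,-7,-8,5,-3,-3,7,-3,0] : List ℤ),
    ([-5,4,-2,1,3,10,8,-8,-8,-18,-8,-6,10,5,-8,7,-10,-5,4,4,17,1,-8,14,-4,19,5,0,4,1,14,-14,-8,-9,5,-5,-3,9,-5,0] : List ℤ),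
    ([-16,-17,-1,-5,-6,8,12,-16,-8,-20,-3,-11,9,4,-10,-3,-8,0,5,-4,21,-2,-13,17,-4,21,4,-6,13,3,9,-14,-8,-11,8,-4,-5,11,-3,-6] : List ℤ),
    ([-9,-7,-1,-2,-1,9,10,-12,-8,-19,-5,-11,9,6,-8,2,-9,-3,5,0,20,0,-10,16,-4,19,5,-4,7,2,11,-14,-9,-10,6,-5,-4,10,-4,-4] : List ℤ),
    ([0,16,-1,6,7,15,6,-6,-12,-18,-11,-4,12,6,-7,12,-12,-8,5,7,17,3,-8,13,-4,19,7,2,0,0,18,-14,-9,-9,3,-7,-2,8,-6,2] : List ℤ),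
    ([2,18,0,5,7,17,6,-8,-11,-20,-11,-6,12,8,-7,12,-13,-8,5,8,19,5,-9,14,-3,21,7,2,-1,-1,18,-16,-11,-10,3,-7,-2,9,-7,1] : List ℤ),
    ([1,0,1,-2,-1,1,2,-3,-2,-4,0,-2,1,1,-1,0,-2,-1,0,0,3,0,-2,2,0,5,1,0,2,0,2,-2,-2,-2,2,-1,-1,2,-1,-1] : List ℤ),
    ([-2,-7,-1,-3,-1,-1,1,-2,3,-2,1,-3,0,1,-1,-2,0,1,0,-1,2,0,-1,3,0,1,0,-2,2,0,-1,-3,-1,-1,1,0,-1,2,0,-2] : List ℤ),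
    ([-3,0,0,0,2,3,2,-2,-2,-4,-2,-2,1,1,-2,2,-1,-2,2,1,6,-1,-1,4,-2,4,1,0,0,2,3,-2,-2,-3,2,-1,-1,2,-1,1] : List ℤ),
    ([-3,-6,-1,0,-1,-3,3,-1,-1,-2,0,-2,2,0,-2,-1,-1,0,0,-1,1,-1,-1,3,-1,1,1,-2,3,0,1,-3,0,-1,1,-1,-1,2,0,-1] : List ℤ),
    ([-5,-3,-3,-1,-1,7,4,-6,-4,-7,-3,-3,3,1,-4,0,-2,0,2,-1,9,0,-4,5,-2,7,1,-2,3,1,4,-3,-2,-3,2,-1,-1,3,-1,-1] : List ℤ),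
    ([-5,-2,-1,-1,-2,1,2,-1,-2,-6,-2,-1,4,0,-3,0,-3,0,0,-1,4,-1,-3,4,-2,7,1,-1,5,0,4,-4,-1,-2,2,-1,-1,3,-1,-1] : List ℤ),
    ([-8,-10,0,-2,-6,0,5,-7,-1,-6,1,-5,2,2,-3,-4,-2,3,2,-3,7,-1,-4,5,-1,7,0,-3,5,1,0,-4,-3,-3,2,0,-1,3,-1,-4] : List ℤ),
    ([-2,0,-1,1,1,3,4,-5,0,-3,-2,1,0,1,-2,2,0,-3,2,3,4,-2,-1,4,-1,3,0,2,-1,2,4,-3,-3,-3,2,0,-1,2,-1,3] : List ℤ),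
    ([0,-1,3,-1,-1,2,0,-3,-1,-1,1,0,1,0,0,-1,-2,0,1,-1,1,1,-4,1,2,2,1,0,2,0,0,-2,-2,-2,1,-1,-1,1,0,-2] : List ℤ),
    ([12,33,-1,12,12,10,-4,9,-8,-5,-10,1,8,5,0,15,-8,-7,1,10,3,7,2,1,-2,5,5,5,-10,-4,12,-5,-3,0,-5,-5,3,0,-5,5] : List ℤ)]

theorem P40_mul_Q40 : P40 * Q40 = 1 := by
  decide +kernel

theorem dualNorm21_P40_mul_Bint (i : Fin 40) : dualNorm21 (n := 20) ((P40 * Bint) i) = 84 := by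
  revert i
  decide +kernel

/-- **Lemma 7.** `O₄₀` has a basis consisting of 4-vectors: there is `P ∈ GL(40, ℤ)`
such that every diagonal entry of `P·G·Pᵀ` equals `4`. -/
theorem O40_basis_of_four_vectors :
    ∃ P : Matrix (Fin 40) (Fin 40) ℤ, IsUnit P.det ∧
      ∀ i, (P.map (Int.cast : ℤ → ℚ) * GO40 * (P.map (Int.cast : ℤ → ℚ))ᵀ) i i = 4 := by
  refine ⟨P40, isUnit_det_of_right_inverse P40_mul_Q40, fun i => ?_⟩
  set W := (P40 * Bint).map (Int.castRingHom ℚ)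
  have hW : P40.map (Int.cast : ℤ → ℚ) * Bmat = W := by
    rw [← Bint_map_intCast]
    exact (Matrix.map_mul (f := Int.castRingHom ℚ)).symm
  calc _ = (W * Ge * Wᵀ) i i := by
        rw [← hW, GO40]
        simp only [transpose_mul, Matrix.mul_assoc]
    _ = Int.castRingHom ℚ (dualNorm21 (n := 20) ((P40 * Bint) i)) / 21 := by
        rw [mul_mul_transpose_apply_self, dotProduct_Ge_mulVec, map_dualNorm21]
        rfl
    _ = 4 := by
        rw [dualNorm21_P40_mul_Bint]
        norm_num
end
end

section
/- The generator vectors of the chosen generalized quadratic residue codes satisfy condition (i′): for all indices i, j ∈ F_19 ∪ {∞}, the integer 28·(U_i·U_jᵀ) + 7·(U_i·W_jᵀ + W_i·U_jᵀ) + 2·(W_i·W_jᵀ) is divisible by 42 if i = j, and divisible by 21 if i ≠ j. -/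
open Matrix
open scoped Classical

noncomputable section

/-- The generator `U_i` (for `i ∈ F₁₉ ∪ {∞}`, with `∞ = none`) of the generalized
quadratic residue code of length 20 over `ℤ/3ℤ` with parameter `(1,0,0,0,1,1)`,
taken with its canonical integer entries. -/
def Uvec : Option (ZMod 19) → Option (ZMod 19) → ℤ
  | none, none => 0
  | none, some _ => 1
  | some _, none => 1
  | some i, some j =>
      if i = j then 0 else if IsSquare (i - j) then 0 else 1

/-- The generator `W_i` (for `i ∈ F₁₉ ∪ {∞}`, with `∞ = none`) of the generalized
quadratic residue code of length 20 over `ℤ/21ℤ` with parameter `(0,7,1,0,4,17)`,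
taken with its canonical integer entries. -/
def Wvec : Option (ZMod 19) → Option (ZMod 19) → ℤ
  | none, none => 7
  | none, some _ => 0
  | some _, none => 17
  | some i, some j =>
      if i = j then 1 else if IsSquare (i - j) then 0 else 4

/-- Condition (i′): for all indices `i, j ∈ F₁₉ ∪ {∞}`, the integer
`28·(Uᵢ·Uⱼᵀ) + 7·(Uᵢ·Wⱼᵀ + Wᵢ·Uⱼᵀ) + 2·(Wᵢ·Wⱼᵀ)` is divisible by `42` when `i = j`
and by `21` when `i ≠ j`. -/
theorem qr_codes_condition_i' :
    ∀ i j : Option (ZMod 19),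
      (i = j → (42 : ℤ) ∣
        (28 * (Uvec i ⬝ᵥ Uvec j) + 7 * (Uvec i ⬝ᵥ Wvec j + Wvec i ⬝ᵥ Uvec j) +
          2 * (Wvec i ⬝ᵥ Wvec j))) ∧
      (i ≠ j → (21 : ℤ) ∣
        (28 * (Uvec i ⬝ᵥ Uvec j) + 7 * (Uvec i ⬝ᵥ Wvec j + Wvec i ⬝ᵥ Uvec j) +
          2 * (Wvec i ⬝ᵥ Wvec j))) := by
  decide
end
end
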